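/- arXiv:2104.01346 — 3 statements merged into one kernel-verified Lean document; each statement's English description precedes it below -/
import Mathlib

section
/- Let D = (D1,D2) : [0,1]² → {0,1}² be a weakly monotone decision rule. Suppose the family of joint distributions of (p1,p2) indexed by parameters satisfies: for every u > 0 and ε > 0 there exists a parameter ϑ (with hypothesis 1 true and hypothesis 2 false) under which P(p2 > c2) ≤ ε can be made arbitrarily small for any fixed c2 and p1 is uniform on [0,1]. If D satisfies strong FWER control at level α ∈ (0,1) (in particular P_ϑ(D1 = 1) ≤ α whenever hypothesis 1 is true), then D1(c1,c2) = 0 for every (c1,c2) with c1 > α. -/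
open MeasureTheory Set

/-- Lemma 1: a weakly monotone procedure with strong FWER control, in a model admitting
alternatives concentrating the second p-value near 0 while the first p-value is uniform,
must be marginally nominal `α` for the first hypothesis. -/
theorem stmt_4 {ι : Type*} (α : ℝ) (hα : α ∈ Ioo (0:ℝ) 1)
    (D1 D2 : ℝ × ℝ → Bool) (hD1 : Measurable D1)
    (hmono1 : ∀ p q : ℝ × ℝ, p.1 ≤ q.1 → p.2 ≤ q.2 → D1 q = true → D1 p = true)
    (hmono2 : ∀ p q : ℝ × ℝ, p.1 ≤ q.1 → p.2 ≤ q.2 → D2 q = true → D2 p = true)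
    (μ : ι → Measure (ℝ × ℝ)) (hprob : ∀ i, IsProbabilityMeasure (μ i))
    (hfam : ∀ c2 : ℝ, ∀ ε : ℝ, 0 < ε → ∃ i : ι,
      (μ i).map Prod.fst = volume.restrict (Icc (0:ℝ) 1) ∧
      μ i {p : ℝ × ℝ | c2 < p.2} ≤ ENNReal.ofReal ε ∧
      μ i {p : ℝ × ℝ | D1 p = true} ≤ ENNReal.ofReal α) :
    ∀ c : ℝ × ℝ, α < c.1 → D1 c = false := by
  rintro c hc
  by_contra hcontra
  have hctrue : D1 c = true := by
    cases h : D1 c with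
    | false => exact absurd h hcontra
    | true => rfl
  obtain ⟨hα0, hα1⟩ := hα
  have hm : α < min c.1 1 := lt_min hc hα1
  set ε : ℝ := (min c.1 1 - α) / 2 with hε
  have hεpos : 0 < ε := by simp only [hε]; linarith
  obtain ⟨i, hmap, hsmall, hfwer⟩ := hfam c.2 ε hεpos
  -- B ⊆ A ∪ C
  have hsub : {p : ℝ × ℝ | p.1 ≤ c.1} ⊆
      {p : ℝ × ℝ | D1 p = true} ∪ {p : ℝ × ℝ | c.2 < p.2} := by
    intro p hp
    by_cases h2 : c.2 < p.2
    · exact Or.inr h2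
    · exact Or.inl (hmono1 p c hp (le_of_not_gt h2) hctrue)
  have hB : μ i {p : ℝ × ℝ | p.1 ≤ c.1} = ENNReal.ofReal (min c.1 1) := by
    have : {p : ℝ × ℝ | p.1 ≤ c.1} = Prod.fst ⁻¹' Iic c.1 := rfl
    rw [this, ← Measure.map_apply measurable_fst measurableSet_Iic, hmap,
      Measure.restrict_apply measurableSet_Iic]
    have : Iic c.1 ∩ Icc (0:ℝ) 1 = Icc 0 (min c.1 1) := by
      ext x
      simp [mem_Iic, mem_Icc, le_min_iff, and_comm, and_assoc, and_left_comm]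
    rw [this, Real.volume_Icc]
    norm_num
  have hBC : μ i {p : ℝ × ℝ | p.1 ≤ c.1} ≤
      μ i {p : ℝ × ℝ | D1 p = true} + μ i {p : ℝ × ℝ | c.2 < p.2} :=
    le_trans (measure_mono hsub) (measure_union_le _ _)
  have hle : ENNReal.ofReal (min c.1 1) ≤ ENNReal.ofReal α + ENNReal.ofReal ε := by
    rw [← hB]; exact le_trans hBC (add_le_add hfwer hsmall)
  rw [← ENNReal.ofReal_add hα0.le hεpos.le] at hle
  have := (ENNReal.ofReal_le_ofReal_iff (by linarith)).mp hle
  linarith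
end

section
/- Fix α ∈ (0,1) and θ < 0. Define s : [0,1]² → [0,∞) by s(p1,p2) = (1/2)[1{p1 ≤ α} e^{Φ⁻¹(p1)θ − θ²/2} + 1{p2 ≤ α} e^{Φ⁻¹(p2)θ − θ²/2}], where Φ⁻¹ is the standard normal quantile function. If θ > −(log 2)/(Φ⁻¹(α) − Φ⁻¹(α/2)), then for all (p1,p2) with α/2 < p1 ≤ α and p2 > α, we have s(p1,p2) < s(α,α). -/
open MeasureTheory ProbabilityTheory Set
open scoped NNReal

/-- The standard normal cumulative distribution function. -/
noncomputable def stdNormalCDF (x : ℝ) : ℝ := (gaussianReal 0 1 (Iic x)).toReal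

/-- The standard normal quantile function. -/
noncomputable def stdNormalQuantile : ℝ → ℝ := Function.invFun stdNormalCDF

lemma gaussian_Ioc_pos {x y : ℝ} (hxy : x < y) : 0 < gaussianReal 0 1 (Ioc x y) := by
  rw [pos_iff_ne_zero]
  intro h0
  have h := gaussianReal_absolutelyContinuous' (0 : ℝ) (v := 1) one_ne_zero h0
  rw [Real.volume_Ioc] at h
  simp only [ENNReal.ofReal_eq_zero] at h
  linarith

lemma gaussian_Iic_add {x y : ℝ} (hxy : x ≤ y) :
    gaussianReal 0 1 (Iic y) = gaussianReal 0 1 (Iic x) + gaussianReal 0 1 (Ioc x y) := by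
  rw [← Iic_union_Ioc_eq_Iic hxy, measure_union (Iic_disjoint_Ioc le_rfl) measurableSet_Ioc]

lemma stdNormalCDF_strictMono : StrictMono stdNormalCDF := by
  intro x y hxy
  unfold stdNormalCDF
  rw [gaussian_Iic_add hxy.le]
  refine ENNReal.toReal_strict_mono (ENNReal.add_ne_top.mpr ⟨measure_ne_top _ _, measure_ne_top _ _⟩) ?_
  exact ENNReal.lt_add_right (measure_ne_top _ _) (gaussian_Ioc_pos hxy).ne'

lemma gaussianPDF_le_one (t : ℝ) : gaussianPDF 0 1 t ≤ 1 := by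
  rw [gaussianPDF, ← ENNReal.ofReal_one]
  refine ENNReal.ofReal_le_ofReal ?_
  rw [gaussianPDFReal]
  have h1 : (1 : ℝ) ≤ √(2 * Real.pi * (1:ℝ≥0)) := by
    rw [Real.one_le_sqrt]
    · push_cast
      nlinarith [Real.pi_gt_three]
  have h2 : Real.exp (-(t - 0) ^ 2 / (2 * (1:ℝ≥0))) ≤ 1 := by
    rw [Real.exp_le_one_iff]
    push_cast
    nlinarith [sq_nonneg (t - 0)]
  calc (√(2 * Real.pi * (1:ℝ≥0)))⁻¹ * Real.exp (-(t - 0) ^ 2 / (2 * (1:ℝ≥0)))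
      ≤ 1 * 1 := by
        refine mul_le_mul ?_ h2 (Real.exp_nonneg _) zero_le_one
        exact inv_le_one_of_one_le₀ h1
    _ = 1 := by ring

lemma stdNormalCDF_lipschitz {x y : ℝ} (hxy : x ≤ y) :
    stdNormalCDF y - stdNormalCDF x ≤ y - x := by
  unfold stdNormalCDF
  rw [gaussian_Iic_add hxy, ENNReal.toReal_add (measure_ne_top _ _) (measure_ne_top _ _)]
  have hle : gaussianReal 0 1 (Ioc x y) ≤ ENNReal.ofReal (y - x) := by
    rw [gaussianReal_apply (0:ℝ) (v := 1) one_ne_zero]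
    calc ∫⁻ t in Ioc x y, gaussianPDF 0 1 t
        ≤ ∫⁻ _ in Ioc x y, 1 := lintegral_mono fun t => gaussianPDF_le_one t
      _ = volume (Ioc x y) := setLIntegral_one _
      _ = ENNReal.ofReal (y - x) := Real.volume_Ioc
  have := ENNReal.toReal_mono ENNReal.ofReal_ne_top hle
  rw [ENNReal.toReal_ofReal (by linarith)] at this
  linarith

lemma stdNormalCDF_continuous : Continuous stdNormalCDF := by
  refine LipschitzWith.continuous (K := 1) ?_
  refine LipschitzWith.of_dist_le_mul fun x y => ?_
  simp only [NNReal.coe_one, one_mul, Real.dist_eq]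
  rcases le_total x y with h | h
  · have h1 := stdNormalCDF_lipschitz h
    have h2 := (stdNormalCDF_strictMono.monotone h)
    rw [abs_sub_comm, abs_of_nonneg (by linarith), abs_sub_comm, abs_of_nonneg (by linarith)]
    linarith
  · have h1 := stdNormalCDF_lipschitz h
    have h2 := (stdNormalCDF_strictMono.monotone h)
    rw [abs_of_nonneg (by linarith), abs_of_nonneg (by linarith)]
    linarith

lemma stdNormalCDF_eq_cdf : stdNormalCDF = cdf (gaussianReal 0 1) := by
  funext x
  rw [cdf_eq_real]
  rfl

lemma exists_stdNormalCDF_eq {t : ℝ} (ht : t ∈ Ioo (0:ℝ) 1) : ∃ x, stdNormalCDF x = t := by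
  have hbot : Filter.Tendsto stdNormalCDF Filter.atBot (nhds 0) := by
    rw [stdNormalCDF_eq_cdf]; exact tendsto_cdf_atBot _
  have htop : Filter.Tendsto stdNormalCDF Filter.atTop (nhds 1) := by
    rw [stdNormalCDF_eq_cdf]; exact tendsto_cdf_atTop _
  obtain ⟨a, ha⟩ := (hbot.eventually_lt_const ht.1).exists
  obtain ⟨b, hb⟩ := (htop.eventually_const_lt ht.2).exists
  have hab : a ≤ b := by
    by_contra h
    exact absurd (stdNormalCDF_strictMono (not_le.mp h)) (by linarith)
  have hmem : t ∈ Icc (stdNormalCDF a) (stdNormalCDF b) := ⟨ha.le, hb.le⟩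
  obtain ⟨x, _, hx⟩ := intermediate_value_Icc hab stdNormalCDF_continuous.continuousOn hmem
  exact ⟨x, hx⟩

lemma stdNormalCDF_quantile {t : ℝ} (ht : t ∈ Ioo (0:ℝ) 1) :
    stdNormalCDF (stdNormalQuantile t) = t :=
  Function.invFun_eq (exists_stdNormalCDF_eq ht)

lemma stdNormalQuantile_lt {s t : ℝ} (hs : s ∈ Ioo (0:ℝ) 1) (ht : t ∈ Ioo (0:ℝ) 1)
    (hst : s < t) : stdNormalQuantile s < stdNormalQuantile t := by
  by_contra h
  have := stdNormalCDF_strictMono.monotone (not_lt.mp h)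
  rw [stdNormalCDF_quantile hs, stdNormalCDF_quantile ht] at this
  linarith

/-- If `θ > -(log 2)/(Φ⁻¹(α) - Φ⁻¹(α/2))`, then on the region `α/2 < p₁ ≤ α`, `p₂ > α`
the score `s` of the `Π₁` objective is strictly below its value at `(α, α)`. -/
theorem stmt_7 (α θ p1 p2 : ℝ) (hα : α ∈ Set.Ioo (0:ℝ) 1) (hθ : θ < 0)
    (hθ' : -(Real.log 2) / (stdNormalQuantile α - stdNormalQuantile (α / 2)) < θ)
    (hp1 : α / 2 < p1) (hp1' : p1 ≤ α) (hp2 : α < p2) (hp2' : p2 ≤ 1) :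
    (1 / 2) * ((if p1 ≤ α then Real.exp (stdNormalQuantile p1 * θ - θ ^ 2 / 2) else 0)
        + (if p2 ≤ α then Real.exp (stdNormalQuantile p2 * θ - θ ^ 2 / 2) else 0))
      < (1 / 2) * ((if α ≤ α then Real.exp (stdNormalQuantile α * θ - θ ^ 2 / 2) else 0)
        + (if α ≤ α then Real.exp (stdNormalQuantile α * θ - θ ^ 2 / 2) else 0)) := by
  obtain ⟨hα0, hα1⟩ := hα
  rw [if_pos hp1', if_neg (not_le.mpr hp2), if_pos le_rfl]
  have hhalf : α / 2 ∈ Ioo (0:ℝ) 1 := ⟨by linarith, by linarith⟩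
  have hp1mem : p1 ∈ Ioo (0:ℝ) 1 := ⟨by linarith, by linarith⟩
  have hαmem : α ∈ Ioo (0:ℝ) 1 := ⟨hα0, hα1⟩
  have hq1 : stdNormalQuantile (α / 2) < stdNormalQuantile p1 :=
    stdNormalQuantile_lt hhalf hp1mem hp1
  have hq2 : stdNormalQuantile (α / 2) < stdNormalQuantile α :=
    stdNormalQuantile_lt hhalf hαmem (by linarith)
  set qh := stdNormalQuantile (α / 2)
  set qp := stdNormalQuantile p1
  set qa := stdNormalQuantile α
  have hd : (0:ℝ) < qa - qh := by linarith
  have hθd : -(Real.log 2) < θ * (qa - qh) := by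
    rw [div_lt_iff₀ hd] at hθ'
    linarith
  have hmul : qp * θ < qh * θ := by
    exact mul_lt_mul_of_neg_right hq1 hθ
  have hkey : qp * θ - θ ^ 2 / 2 - Real.log 2 < qa * θ - θ ^ 2 / 2 := by nlinarith
  have hexp := Real.exp_lt_exp.mpr hkey
  rw [Real.exp_sub, Real.exp_log two_pos] at hexp
  linarith [Real.exp_pos (qa * θ - θ ^ 2 / 2)]
end

section
/- Let p1, p2 be independent uniform on [0,1] and α ∈ (0,1/2). For Hommel's procedure D_i = 1{p_i ≤ α/2 or max(p1,p2) ≤ α}, i = 1,2, the probability of any rejection P(max(D1,D2)=1) equals exactly α. -/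
open MeasureTheory Set

/-- Under the global null with independent uniform p-values, Hommel's procedure for two
hypotheses has probability of any rejection exactly `α`. -/
theorem stmt_14 (α : ℝ) (hα : α ∈ Set.Ioo (0:ℝ) (1 / 2)) :
    ((volume.restrict (Icc (0:ℝ) 1)).prod (volume.restrict (Icc (0:ℝ) 1)))
      {p : ℝ × ℝ | p.1 ≤ α / 2 ∨ p.2 ≤ α / 2 ∨ (p.1 ≤ α ∧ p.2 ≤ α)} =
      ENNReal.ofReal α := by
  obtain ⟨hα0, hα1⟩ := hα
  set μ := volume.restrict (Icc (0:ℝ) 1) with hμ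
  have hset : {p : ℝ × ℝ | p.1 ≤ α / 2 ∨ p.2 ≤ α / 2 ∨ (p.1 ≤ α ∧ p.2 ≤ α)} =
      (Iic (α/2) ×ˢ univ) ∪ ((Ioi (α/2) ×ˢ Iic (α/2)) ∪ (Ioc (α/2) α ×ˢ Ioc (α/2) α)) := by
    ext ⟨x, y⟩
    simp only [mem_setOf_eq, mem_union, mem_prod, mem_Iic, mem_Ioi, mem_Ioc, mem_univ,
      and_true]
    constructor
    · rintro (h | h | ⟨h1, h2⟩)
      · exact Or.inl h
      · by_cases hx : x ≤ α/2
        · exact Or.inl hx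
        · exact Or.inr (Or.inl ⟨lt_of_not_ge hx, h⟩)
      · by_cases hx : x ≤ α/2
        · exact Or.inl hx
        · by_cases hy : y ≤ α/2
          · exact Or.inr (Or.inl ⟨lt_of_not_ge hx, hy⟩)
          · exact Or.inr (Or.inr ⟨⟨lt_of_not_ge hx, h1⟩, ⟨lt_of_not_ge hy, h2⟩⟩)
    · rintro (h | ⟨-, h⟩ | ⟨⟨-, h1⟩, ⟨-, h2⟩⟩)
      · exact Or.inl h
      · exact Or.inr (Or.inl h)
      · exact Or.inr (Or.inr ⟨h1, h2⟩)
  rw [hset]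
  have hd1 : Disjoint (Iic (α/2) ×ˢ (univ : Set ℝ))
      ((Ioi (α/2) ×ˢ Iic (α/2)) ∪ (Ioc (α/2) α ×ˢ Ioc (α/2) α)) := by
    rw [Set.disjoint_left]
    rintro ⟨x, y⟩ ⟨hx, -⟩ (⟨hx', -⟩ | ⟨⟨hx', -⟩, -⟩) <;>
      simp only [mem_Iic, mem_Ioi, mem_Ioc] at * <;> linarith
  have hd2 : Disjoint (Ioi (α/2) ×ˢ Iic (α/2)) (Ioc (α/2) α ×ˢ Ioc (α/2) α) := by
    rw [Set.disjoint_left]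
    rintro ⟨x, y⟩ ⟨-, hy⟩ ⟨-, hy'⟩
    simp only [mem_Iic, mem_Ioc] at *
    linarith [hy'.1]
  have hm2 : MeasurableSet ((Ioi (α/2) ×ˢ Iic (α/2)) ∪ (Ioc (α/2) α ×ˢ Ioc (α/2) α)) :=
    ((measurableSet_Ioi.prod measurableSet_Iic).union
      (measurableSet_Ioc.prod measurableSet_Ioc))
  rw [measure_union hd1 hm2, measure_union hd2 (measurableSet_Ioc.prod measurableSet_Ioc),
    Measure.prod_prod, Measure.prod_prod, Measure.prod_prod]
  have e1 : μ (Iic (α/2)) = ENNReal.ofReal (α/2) := by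
    rw [hμ, Measure.restrict_apply measurableSet_Iic]
    have : Iic (α/2) ∩ Icc (0:ℝ) 1 = Icc 0 (α/2) := by
      ext x; simp only [mem_inter_iff, mem_Iic, mem_Icc]; constructor
      · rintro ⟨h, h0, -⟩; exact ⟨h0, h⟩
      · rintro ⟨h0, h⟩; exact ⟨h, h0, by linarith⟩
    rw [this, Real.volume_Icc]; norm_num
  have e2 : μ (univ : Set ℝ) = 1 := by
    rw [hμ, Measure.restrict_apply_univ, Real.volume_Icc]; norm_num
  have e3 : μ (Ioi (α/2)) = ENNReal.ofReal (1 - α/2) := by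
    rw [hμ, Measure.restrict_apply measurableSet_Ioi]
    have : Ioi (α/2) ∩ Icc (0:ℝ) 1 = Ioc (α/2) 1 := by
      ext x; simp only [mem_inter_iff, mem_Ioi, mem_Icc, mem_Ioc]; constructor
      · rintro ⟨h, -, h1⟩; exact ⟨h, h1⟩
      · rintro ⟨h, h1⟩; exact ⟨h, by linarith, h1⟩
    rw [this, Real.volume_Ioc]
  have e4 : μ (Ioc (α/2) α) = ENNReal.ofReal (α/2) := by
    rw [hμ, Measure.restrict_apply measurableSet_Ioc]
    have : Ioc (α/2) α ∩ Icc (0:ℝ) 1 = Ioc (α/2) α := by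
      apply inter_eq_left.mpr
      intro x hx; simp only [mem_Ioc] at hx; exact ⟨by linarith [hx.1], by linarith [hx.2]⟩
    rw [this, Real.volume_Ioc]
    congr 1; ring
  rw [e1, e2, e3, e4, mul_one]
  rw [← ENNReal.ofReal_mul (by linarith), ← ENNReal.ofReal_mul (by linarith),
    ← ENNReal.ofReal_add (by nlinarith) (by nlinarith),
    ← ENNReal.ofReal_add (by linarith) (by nlinarith)]
  congr 1; ring
end
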